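/- Let F be a field of characteristic 2 and let u ∈ F((x⁻¹)) be irrational with partial quotients p₀, p₁, … and complete quotients u₀, u₁, …. Suppose j ≥ 1 (so that deg pⱼ ≥ 1 and deg pⱼ₊₁ ≥ 1) and Q, R, S, T ∈ F[x] satisfy S·uⱼ² + T ≠ 0, uᵢ = (Q·uⱼ² + R)/(S·uⱼ² + T), and deg(S·uⱼ²) > deg T. Set Q' = Q·pⱼ² + R, R' = Q, S' = S·pⱼ² + T, T' = S. Then uᵢ = (Q'·uⱼ₊₁² + R')/(S'·uⱼ₊₁² + T'), deg S' = deg S + 2·deg pⱼ, and deg(S'·uⱼ₊₁²) > deg T'. -/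

import Mathlib

open Polynomial
open scoped Classical

noncomputable section

namespace PaperCF

/-- The element `x` of `F((x⁻¹))`, realized as the Hahn series `T⁻¹` where `T` is the
Hahn-series variable (so a series in `x⁻¹` has well-ordered support in `T`). -/
def xx (F : Type*) [Field F] : LaurentSeries F := HahnSeries.single (-1 : ℤ) 1

/-- Embedding of the polynomial ring `F[x]` into `F((x⁻¹))`, `x ↦ xx`. -/
def polyEmb (F : Type*) [Field F] : Polynomial F →+* LaurentSeries F :=
  (Polynomial.aeval (xx F)).toRingHom

/-- The degree of a Laurent series in `x⁻¹` (largest exponent of `x` with nonzero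
coefficient), with `deg 0 = ⊥`. -/
def degB (F : Type*) [Field F] (u : LaurentSeries F) : WithBot ℤ :=
  if u = 0 then ⊥ else (-u.order : ℤ)

/-- The non-archimedean absolute value `|u| = q ^ deg u` (and `|0| = 0`). -/
def absVal (F : Type*) [Field F] (q : ℝ) (u : LaurentSeries F) : ℝ :=
  if u = 0 then 0 else q ^ (-u.order)

/-- `u` is irrational: it is not a ratio of two polynomials in `x`. -/
def IsIrrational (F : Type*) [Field F] (u : LaurentSeries F) : Prop :=
  ∀ a b : Polynomial F, b ≠ 0 → u * polyEmb F b ≠ polyEmb F a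

/-- The (necessarily unique, non-terminating) continued fraction expansion of `u`:
`p i` are the partial quotients, `U i` the complete quotients.  The condition
`0 < (U i - p i).order` says exactly that `p i` is the integral part of `U i`
(the difference has only negative powers of `x`). -/
structure CFExpansion (F : Type*) [Field F] (u : LaurentSeries F) where
  p : ℕ → Polynomial F
  U : ℕ → LaurentSeries F
  U_zero : U 0 = u
  ne : ∀ i, U i ≠ polyEmb F (p i)
  intPart : ∀ i, 0 < (U i - polyEmb F (p i)).order
  step : ∀ i, U (i + 1) = (U i - polyEmb F (p i))⁻¹

/-- Numerators `aₙ` of the convergents: `aₙ = pₙ aₙ₋₁ + aₙ₋₂`. -/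
def convNum {F : Type*} [Field F] (p : ℕ → Polynomial F) : ℕ → Polynomial F
  | 0 => p 0
  | 1 => p 1 * p 0 + 1
  | (n + 2) => p (n + 2) * convNum p (n + 1) + convNum p n

/-- Denominators `bₙ` of the convergents: `bₙ = pₙ bₙ₋₁ + bₙ₋₂`. -/
def convDen {F : Type*} [Field F] (p : ℕ → Polynomial F) : ℕ → Polynomial F
  | 0 => 1
  | 1 => p 1
  | (n + 2) => p (n + 2) * convDen p (n + 1) + convDen p n

/-- The `n`-th convergent `cₙ = aₙ/bₙ = [p₀; p₁, …, pₙ]`. -/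
def conv (F : Type*) [Field F] (p : ℕ → Polynomial F) (n : ℕ) : LaurentSeries F :=
  polyEmb F (convNum p n) / polyEmb F (convDen p n)

/-- `u` has bounded partial quotients. -/
def HasBoundedPQ (F : Type*) [Field F] (u : LaurentSeries F) : Prop :=
  ∃ cf : CFExpansion F u, ∃ N : ℕ, ∀ i, (cf.p i).natDegree ≤ N

/-- The integral part `⌊u⌋ ∈ F[x]`: the sum of the terms of `u` of nonnegative degree. -/
def intPart (F : Type*) [Field F] (u : LaurentSeries F) : Polynomial F :=
  ∑ n ∈ Finset.Icc (0 : ℤ) (-u.order), Polynomial.monomial n.toNat (u.coeff (-n))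

/-- The sequence of complete quotients produced by the continued fraction algorithm
(with junk value `0⁻¹ = 0` after termination). -/
def cqSeq (F : Type*) [Field F] (u : LaurentSeries F) : ℕ → LaurentSeries F
  | 0 => u
  | n + 1 => (cqSeq F u n - polyEmb F (intPart F (cqSeq F u n)))⁻¹

end PaperCF

/-! In characteristic 2 squaring is additive, so `uⱼ = pⱼ + 1/uⱼ₊₁` gives
`uⱼ² = pⱼ² + 1/uⱼ₊₁²`; substituting this into `A uⱼ² + B` and clearing the denominator
`uⱼ₊₁²` produces the new coefficients. Since `deg uⱼ = deg pⱼ` for `j ≥ 1`, the hypothesis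
`deg T < deg (S uⱼ²)` says `deg T < deg (S pⱼ²)`, so `S' = S pⱼ² + T` has the degree of `S pⱼ²`,
and then `deg (S' uⱼ₊₁²) = deg S' + 2 deg pⱼ₊₁ > deg S`. -/

theorem HahnSeries.order_eq_of_order_lt_order_sub {Γ R : Type*} [LinearOrder Γ] [Zero Γ]
    [AddCommGroup R] {x y : HahnSeries Γ R} (hx : x ≠ 0) (hxy : x - y ≠ 0)
    (h : x.order < (x - y).order) : y.order = x.order := by
  have htop : x.orderTop < (x - y).orderTop := by
    rw [← order_eq_orderTop_of_ne_zero hx, ← order_eq_orderTop_of_ne_zero hxy]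
    exact_mod_cast h
  have hy := orderTop_sub htop
  rw [sub_sub_cancel] at hy
  have hy0 : y ≠ 0 := by
    rintro rfl
    simp [orderTop_of_ne_zero hx] at hy
  exact_mod_cast (order_eq_orderTop_of_ne_zero hy0).trans
    (hy.trans (order_eq_orderTop_of_ne_zero hx).symm)

theorem LaurentSeries.order_inv {K : Type*} [Field K] (x : LaurentSeries K) :
    x⁻¹.order = -x.order := by
  rcases eq_or_ne x 0 with rfl | hx
  · simp
  · have := HahnSeries.order_mul (inv_ne_zero hx) hx
    rw [inv_mul_cancel₀ hx, HahnSeries.order_one] at this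
    omega

theorem mul_sq_add_eq_of_eq_add_inv {K : Type*} [Field K] [CharP K 2] {w c v : K}
    (hw : w = c + v⁻¹) (hv : v ≠ 0) (a b : K) :
    a * w ^ 2 + b = ((a * c ^ 2 + b) * v ^ 2 + a) / v ^ 2 := by
  rw [hw, CharTwo.add_sq]
  field_simp
  ring

instance LaurentSeries.charP (F : Type*) [Field F] (p : ℕ) [CharP F p] :
    CharP (LaurentSeries F) p :=
  charP_of_injective_algebraMap (algebraMap F _).injective p

namespace PaperCF

section

variable {F : Type*} [Field F]

theorem polyEmb_monomial (n : ℕ) (a : F) :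
    polyEmb F (monomial n a) = HahnSeries.single (-(n : ℤ)) a := by
  simp [polyEmb, xx, HahnSeries.single_pow, HahnSeries.algebraMap_apply']

theorem coeff_polyEmb_neg_natCast (P : F[X]) (m : ℕ) :
    (polyEmb F P).coeff (-(m : ℤ)) = P.coeff m := by
  induction P using Polynomial.induction_on' with
  | add P P' hP hP' => simp [hP, hP']
  | monomial n a => simp [polyEmb_monomial, HahnSeries.coeff_single, coeff_monomial, eq_comm]

theorem polyEmb_ne_zero {P : F[X]} (hP : P ≠ 0) : polyEmb F P ≠ 0 := fun h =>
  hP (leadingCoeff_eq_zero.mp (by rw [leadingCoeff, ← coeff_polyEmb_neg_natCast, h,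
    HahnSeries.coeff_zero]))

theorem order_polyEmb {P : F[X]} (hP : P ≠ 0) : (polyEmb F P).order = -(P.natDegree : ℤ) := by
  have hlead : (polyEmb F P).coeff (-(P.natDegree : ℤ)) ≠ 0 := by
    rwa [coeff_polyEmb_neg_natCast, ne_eq, ← leadingCoeff, leadingCoeff_eq_zero]
  refine le_antisymm (HahnSeries.order_le_of_coeff_ne_zero hlead) (not_lt.mp fun hlt => ?_)
  have hne := HahnSeries.coeff_order_eq_zero.not.mpr (polyEmb_ne_zero hP)
  obtain ⟨m, hm⟩ : ∃ m : ℕ, (polyEmb F P).order = -(m : ℤ) :=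
    ⟨(-(polyEmb F P).order).toNat, by omega⟩
  rw [hm, coeff_polyEmb_neg_natCast] at hne
  exact hne (coeff_eq_zero_of_natDegree_lt (by omega))

theorem degB_mul (u v : LaurentSeries F) : degB F (u * v) = degB F u + degB F v := by
  rcases eq_or_ne u 0 with rfl | hu
  · simp [degB]
  rcases eq_or_ne v 0 with rfl | hv
  · simp [degB]
  simp only [degB, mul_ne_zero hu hv, hu, hv, if_false, HahnSeries.order_mul hu hv]
  norm_cast
  ring

theorem degB_polyEmb (P : F[X]) : degB F (polyEmb F P) = P.degree.map ((↑) : ℕ → ℤ) := by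
  rcases eq_or_ne P 0 with rfl | hP
  · simp [degB]
  simp [degB, polyEmb_ne_zero hP, order_polyEmb hP, degree_eq_natDegree hP]

theorem degB_polyEmb_lt_degB_polyEmb {P P' : F[X]} :
    degB F (polyEmb F P) < degB F (polyEmb F P') ↔ P.degree < P'.degree := by
  rw [degB_polyEmb, degB_polyEmb]
  exact Nat.strictMono_cast.withBot_map.lt_iff_lt

namespace CFExpansion

variable {u : LaurentSeries F} (cf : CFExpansion F u)

theorem U_eq_add_inv (i : ℕ) : cf.U i = polyEmb F (cf.p i) + (cf.U (i + 1))⁻¹ := by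
  rw [cf.step, inv_inv, add_sub_cancel]

theorem order_U_neg {i : ℕ} (hi : 1 ≤ i) : (cf.U i).order < 0 := by
  obtain ⟨k, rfl⟩ := Nat.exists_eq_add_of_le' hi
  rw [cf.step, LaurentSeries.order_inv, neg_neg_iff_pos]
  exact cf.intPart k

theorem U_ne_zero {i : ℕ} (hi : 1 ≤ i) : cf.U i ≠ 0 := fun h => by
  simpa [h] using cf.order_U_neg hi

theorem order_polyEmb_p {i : ℕ} (hi : 1 ≤ i) : (polyEmb F (cf.p i)).order = (cf.U i).order :=
  HahnSeries.order_eq_of_order_lt_order_sub (cf.U_ne_zero hi) (sub_ne_zero.mpr (cf.ne i))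
    ((cf.order_U_neg hi).trans (cf.intPart i))

theorem p_ne_zero {i : ℕ} (hi : 1 ≤ i) : cf.p i ≠ 0 := fun h0 => by
  have h := cf.order_polyEmb_p hi
  rw [h0, map_zero, HahnSeries.order_zero] at h
  exact (cf.order_U_neg hi).ne h.symm

theorem natDegree_p_pos {i : ℕ} (hi : 1 ≤ i) : 0 < (cf.p i).natDegree := by
  have h := cf.order_polyEmb_p hi
  rw [order_polyEmb (cf.p_ne_zero hi)] at h
  have := cf.order_U_neg hi
  omega

theorem degB_U {i : ℕ} (hi : 1 ≤ i) : degB F (cf.U i) = degB F (polyEmb F (cf.p i)) := by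
  rw [degB_polyEmb, degree_eq_natDegree (cf.p_ne_zero hi), degB, if_neg (cf.U_ne_zero hi),
    ← cf.order_polyEmb_p hi, order_polyEmb (cf.p_ne_zero hi)]
  simp

theorem degB_mul_U_sq {i : ℕ} (hi : 1 ≤ i) (A : F[X]) :
    degB F (polyEmb F A * cf.U i ^ 2) = degB F (polyEmb F (A * cf.p i ^ 2)) := by
  simp only [map_mul, sq, degB_mul, cf.degB_U hi]

theorem mul_U_sq_add [CharP F 2] (i : ℕ) (A B : F[X]) :
    polyEmb F A * cf.U i ^ 2 + polyEmb F B =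
      (polyEmb F (A * cf.p i ^ 2 + B) * cf.U (i + 1) ^ 2 + polyEmb F A) / cf.U (i + 1) ^ 2 := by
  rw [mul_sq_add_eq_of_eq_add_inv (cf.U_eq_add_inv i) (cf.U_ne_zero (Nat.le_add_left 1 i))]
  simp only [map_add, map_mul, map_pow]

end CFExpansion

end

theorem statement17_general (F : Type*) [Field F] [CharP F 2] (u : LaurentSeries F)
    (cf : CFExpansion F u)
    (i j : ℕ) (hj : 1 ≤ j) (Q R S T : Polynomial F)
    (heq : cf.U i = (polyEmb F Q * (cf.U j) ^ 2 + polyEmb F R) /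
      (polyEmb F S * (cf.U j) ^ 2 + polyEmb F T))
    (hST : degB F (polyEmb F T) < degB F (polyEmb F S * (cf.U j) ^ 2)) :
    cf.U i = (polyEmb F (Q * (cf.p j) ^ 2 + R) * (cf.U (j + 1)) ^ 2 + polyEmb F Q) /
      (polyEmb F (S * (cf.p j) ^ 2 + T) * (cf.U (j + 1)) ^ 2 + polyEmb F S) ∧
    (S * (cf.p j) ^ 2 + T).natDegree = S.natDegree + 2 * (cf.p j).natDegree ∧
    degB F (polyEmb F S)
      < degB F (polyEmb F (S * (cf.p j) ^ 2 + T) * (cf.U (j + 1)) ^ 2) := by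
  have hj' : 1 ≤ j + 1 := Nat.le_add_left 1 j
  rw [cf.degB_mul_U_sq hj, degB_polyEmb_lt_degB_polyEmb] at hST
  have hS : S ≠ 0 := by
    rintro rfl
    simp at hST
  have hS' : (S * cf.p j ^ 2 + T).natDegree = S.natDegree + 2 * (cf.p j).natDegree := by
    rw [natDegree_add_eq_left_of_degree_lt hST,
      natDegree_mul hS (pow_ne_zero 2 (cf.p_ne_zero hj)), natDegree_pow]
  have hS'0 : S * cf.p j ^ 2 + T ≠ 0 := by
    intro h
    rw [h, natDegree_zero] at hS'
    have := cf.natDegree_p_pos hj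
    omega
  refine ⟨?_, hS', ?_⟩
  · rw [heq, cf.mul_U_sq_add j Q R, cf.mul_U_sq_add j S T,
      div_div_div_cancel_right₀ (pow_ne_zero 2 (cf.U_ne_zero hj'))]
  · rw [cf.degB_mul_U_sq hj', degB_polyEmb_lt_degB_polyEmb]
    refine degree_lt_degree ?_
    rw [natDegree_mul hS'0 (pow_ne_zero 2 (cf.p_ne_zero hj')), natDegree_pow, hS']
    have := cf.natDegree_p_pos hj
    omega

/-- a step of type (3) with `j ≥ 1` and `deg(S·uⱼ²) > deg T` preserves
that inequality and increases `deg S` by `2·deg pⱼ`. -/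
theorem statement17 (F : Type*) [Field F] [CharP F 2] (u : LaurentSeries F)
    (hu : IsIrrational F u) (cf : CFExpansion F u)
    (i j : ℕ) (hj : 1 ≤ j) (Q R S T : Polynomial F)
    (hden : polyEmb F S * (cf.U j) ^ 2 + polyEmb F T ≠ 0)
    (heq : cf.U i = (polyEmb F Q * (cf.U j) ^ 2 + polyEmb F R) /
      (polyEmb F S * (cf.U j) ^ 2 + polyEmb F T))
    (hST : degB F (polyEmb F T) < degB F (polyEmb F S * (cf.U j) ^ 2)) :
    cf.U i = (polyEmb F (Q * (cf.p j) ^ 2 + R) * (cf.U (j + 1)) ^ 2 + polyEmb F Q) /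
      (polyEmb F (S * (cf.p j) ^ 2 + T) * (cf.U (j + 1)) ^ 2 + polyEmb F S) ∧
    (S * (cf.p j) ^ 2 + T).natDegree = S.natDegree + 2 * (cf.p j).natDegree ∧
    degB F (polyEmb F S)
      < degB F (polyEmb F (S * (cf.p j) ^ 2 + T) * (cf.U (j + 1)) ^ 2) :=
  statement17_general F u cf i j hj Q R S T heq hST

end PaperCF
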